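/- For fixed τ > 0, N ≥ 2, and K ≥ 1, the MSE CDF F_MSE(τ) = [1 - (1 - e^{-σ²/(p_max τ)})^{N^{1/θ}}]^K is strictly decreasing in θ on [1,∞): stronger spatial correlation worsens the probability of meeting a given MSE target. -/
import Mathlib


open Real

/-- For fixed τ > 0, N ≥ 2, K ≥ 1, the MSE CDF is strictly decreasing in θ on
[1,∞): stronger spatial correlation worsens the outage probability. -/
theorem FMSE_strictAnti_in_theta (σ2 pmax τ : ℝ) (hσ : 0 < σ2) (hp : 0 < pmax)
    (hτ : 0 < τ) (K N : ℕ) (hK : 1 ≤ K) (hN : 2 ≤ N) :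
    StrictAntiOn (fun θ : ℝ =>
        (1 - (1 - Real.exp (-(σ2 / (pmax * τ)))) ^ ((N : ℝ) ^ (1 / θ))) ^ K)
      (Set.Ici 1) := by
  intro a ha b hb hab
  simp only [Set.mem_Ici] at ha hb
  simp only
  generalize hx : 1 - Real.exp (-(σ2 / (pmax * τ))) = x
  have ht : 0 < σ2 / (pmax * τ) := div_pos hσ (mul_pos hp hτ)
  have hx0 : 0 < x := by
    rw [← hx]
    have : Real.exp (-(σ2 / (pmax * τ))) < 1 := by
      rw [Real.exp_lt_one_iff]; linarith
    linarith
  have hx1 : x < 1 := by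
    rw [← hx]
    have := Real.exp_pos (-(σ2 / (pmax * τ)))
    linarith
  have ha0 : 0 < a := lt_of_lt_of_le one_pos ha
  have hb0 : 0 < b := lt_of_lt_of_le one_pos hb
  have hN1 : (1 : ℝ) < (N : ℝ) := by
    have : (2 : ℝ) ≤ (N : ℝ) := by exact_mod_cast hN
    linarith
  have hexp : (N : ℝ) ^ (1 / b) < (N : ℝ) ^ (1 / a) :=
    Real.rpow_lt_rpow_of_exponent_lt hN1 (by
      apply one_div_lt_one_div_of_lt ha0 hab)
  have hpow : x ^ ((N : ℝ) ^ (1 / a)) < x ^ ((N : ℝ) ^ (1 / b)) :=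
    Real.rpow_lt_rpow_of_exponent_gt hx0 hx1 hexp
  have hinner : 1 - x ^ ((N : ℝ) ^ (1 / b)) < 1 - x ^ ((N : ℝ) ^ (1 / a)) := by
    linarith
  have hnonneg : 0 ≤ 1 - x ^ ((N : ℝ) ^ (1 / b)) := by
    have : x ^ ((N : ℝ) ^ (1 / b)) ≤ 1 :=
      Real.rpow_le_one (le_of_lt hx0) (le_of_lt hx1)
        (le_of_lt (Real.rpow_pos_of_pos (by linarith) _))
    linarith
  exact pow_lt_pow_left₀ hinner hnonneg (by omega)
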